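/- Let F be a finite field with q elements, and let n ≥ 1, r ≤ n, and t ≤ n²/2 be natural numbers. Then the number of n×n matrices M over F for which there exists an n×n matrix S over F with at most t nonzero entries such that rank(M + S) ≤ r is at most q^(2rn) · (t+1) · C(n², t) · q^t, where C(n², t) is the binomial coefficient. -/

import Mathlib

/-!
If `rank (M + S) ≤ r` with `S` being `t`-sparse, then `M = L * R - S` for an `n × r` matrix `L`
and an `r × n` matrix `R`, so the non-rigid matrices lie in the image of the triples `(L, R, S)`.
There are `q ^ (r * n)` choices for each of `L` and `R`. A `t`-sparse matrix is determined by its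
support, one of at most `(t + 1) * C(n², t)` sets of size at most `t` (the binomial coefficients
increase up to the middle, and `t ≤ n² / 2`), together with at most `q ^ t` values on it.
-/

/-- The number of nonzero entries of a matrix. -/
def nonzeroEntries {n : ℕ} {F : Type*} [Zero F] [DecidableEq F]
    (S : Matrix (Fin n) (Fin n) F) : ℕ :=
  (Finset.univ.filter (fun p : Fin n × Fin n => S p.1 p.2 ≠ 0)).card

open Finset Matrix

theorem Nat.choose_le_choose_of_le_of_two_mul_le {N s t : ℕ} (hst : s ≤ t) (ht : 2 * t ≤ N) :
    N.choose s ≤ N.choose t := by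
  induction t, hst using Nat.le_induction with
  | base => rfl
  | succ k _ ih => exact (ih (by omega)).trans (Nat.choose_le_succ_of_lt_half_left (by omega))

theorem card_finsets_card_le_le {ι : Type*} [Fintype ι] [DecidableEq ι] {t : ℕ}
    (ht : 2 * t ≤ Fintype.card ι) :
    #{s : Finset ι | #s ≤ t} ≤ (t + 1) * (Fintype.card ι).choose t := by
  have hsub : ({s : Finset ι | #s ≤ t} : Finset _) ⊆
      (range (t + 1)).biUnion fun k => powersetCard k univ := by
    intro s hs
    simp only [mem_filter, mem_univ, true_and] at hs
    simp only [mem_biUnion, mem_range, mem_powersetCard, subset_univ, true_and]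
    exact ⟨#s, by omega, rfl⟩
  refine (card_le_card hsub).trans ?_
  refine (card_biUnion_le_card_mul _ _ _ fun k hk => ?_).trans_eq (by rw [card_range])
  rw [card_powersetCard, card_univ]
  exact Nat.choose_le_choose_of_le_of_two_mul_le (Nat.lt_succ_iff.mp (mem_range.mp hk)) ht

theorem card_functions_card_support_le {ι F : Type*} [Fintype ι] [DecidableEq ι] [Zero F]
    [Fintype F] [DecidableEq F] (t : ℕ) :
    #{f : ι → F | #{i | f i ≠ 0} ≤ t} ≤
      #{s : Finset ι | #s ≤ t} * Fintype.card F ^ t := by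
  rw [mul_comm]
  refine card_le_mul_card_image_of_maps_to (f := fun f : ι → F => ({i | f i ≠ 0} : Finset ι))
    (fun f hf => by simpa using hf) _ fun s hs => ?_
  have hst : #s ≤ t := by simpa using hs
  calc _ ≤ #(univ : Finset (s → F)) := by
        refine card_le_card_of_injOn (fun f (i : s) => f i) (fun _ _ => mem_univ _) ?_
        intro f hf g hg hfg
        simp only [coe_filter, mem_filter, mem_univ, true_and] at hf hg
        funext i
        by_cases hi : i ∈ s
        · exact congrFun hfg ⟨i, hi⟩
        · have hf0 : f i = 0 := by simpa [← hf.2] using hi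
          have hg0 : g i = 0 := by simpa [← hg.2] using hi
          rw [hf0, hg0]
    _ ≤ Fintype.card F ^ t := by
        rw [card_univ, Fintype.card_fun, Fintype.card_coe]
        exact Nat.pow_le_pow_right Fintype.card_pos hst

abbrev SparseMatrix (n t : ℕ) (F : Type*) [Zero F] [DecidableEq F] :=
  {S : Matrix (Fin n) (Fin n) F // nonzeroEntries S ≤ t}

theorem card_sparseMatrix_le {n t : ℕ} {F : Type*} [Zero F] [Fintype F] [DecidableEq F]
    (ht : 2 * t ≤ n ^ 2) :
    Nat.card (SparseMatrix n t F) ≤ (t + 1) * (n ^ 2).choose t * Fintype.card F ^ t := by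
  have hcard : Fintype.card (Fin n × Fin n) = n ^ 2 := by simp [sq]
  let e : SparseMatrix n t F ≃ {f : Fin n × Fin n → F // #{p | f p ≠ 0} ≤ t} :=
    (Equiv.curry _ _ _).symm.subtypeEquiv fun _ => Iff.rfl
  rw [Nat.card_congr e, Nat.card_eq_fintype_card, Fintype.card_subtype]
  calc _ ≤ #{s : Finset (Fin n × Fin n) | #s ≤ t} * Fintype.card F ^ t :=
        card_functions_card_support_le t
    _ ≤ _ := by
        gcongr
        simpa only [hcard] using card_finsets_card_le_le (ι := Fin n × Fin n) (hcard ▸ ht)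

theorem Matrix.exists_mul_eq_of_rank_le {m n K : Type*} [Fintype n] [DecidableEq n] [Field K]
    (A : Matrix m n K) {r : ℕ} (h : A.rank ≤ r) :
    ∃ (L : Matrix m (Fin r) K) (R : Matrix (Fin r) n K), L * R = A := by
  set W := LinearMap.range A.mulVecLin
  have hW : Module.finrank K W ≤ r := h
  let e := (Module.finBasis K W).equivFun
  have hfactor : (W.subtype ∘ₗ e.symm.toLinearMap) ∘ₗ
      (e.toLinearMap ∘ₗ A.mulVecLin.rangeRestrict) = A.mulVecLin := by
    refine LinearMap.ext fun v => ?_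
    simp
  -- `P` pads the factorization through `Fin A.rank` to one through `Fin r`
  let P : Matrix (Fin (Module.finrank K W)) (Fin r) K :=
    (1 : Matrix (Fin r) (Fin r) K).submatrix (Fin.castLE hW) id
  have hP : P * Pᵀ = 1 := by
    rw [transpose_submatrix, transpose_one, ← submatrix_mul _ _ _ _ _ Function.bijective_id,
      Matrix.mul_one, submatrix_one _ (Fin.castLE_injective hW)]
  refine ⟨LinearMap.toMatrix' (W.subtype ∘ₗ e.symm.toLinearMap) * P,
    Pᵀ * LinearMap.toMatrix' (e.toLinearMap ∘ₗ A.mulVecLin.rangeRestrict), ?_⟩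
  rw [Matrix.mul_assoc, ← Matrix.mul_assoc P, hP, Matrix.one_mul, ← LinearMap.toMatrix'_comp,
    hfactor]
  exact LinearMap.toMatrix'_toLin' A

theorem count_nonrigid_matrices_general (F : Type) [Field F] [Fintype F] [DecidableEq F]
    (q n r t : ℕ) (hq : Fintype.card F = q)
    (ht : 2 * t ≤ n ^ 2) :
    Nat.card {M : Matrix (Fin n) (Fin n) F |
        ∃ S : Matrix (Fin n) (Fin n) F, nonzeroEntries S ≤ t ∧ (M + S).rank ≤ r}
      ≤ q ^ (2 * r * n) * (t + 1) * Nat.choose (n ^ 2) t * q ^ t := by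
  have hsub : {M : Matrix (Fin n) (Fin n) F |
        ∃ S : Matrix (Fin n) (Fin n) F, nonzeroEntries S ≤ t ∧ (M + S).rank ≤ r} ⊆
      Set.range fun x : Matrix (Fin n) (Fin r) F × Matrix (Fin r) (Fin n) F ×
          SparseMatrix n t F =>
        x.1 * x.2.1 - x.2.2.val := by
    rintro M ⟨S, hS, hrank⟩
    obtain ⟨L, R, hLR⟩ := (M + S).exists_mul_eq_of_rank_le hrank
    exact ⟨(L, R, ⟨S, hS⟩), by simp [hLR]⟩
  calc _ ≤ _ := Nat.card_mono (Set.toFinite _) hsub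
    _ ≤ _ := Finite.card_range_le _
    _ = q ^ (r * n) * (q ^ (n * r) * Nat.card (SparseMatrix n t F)) := by
        simp only [Nat.card_prod, Matrix, Nat.card_fun, Nat.card_eq_fintype_card (α := F), hq,
          Nat.card_eq_fintype_card (α := Fin _), Fintype.card_fin, pow_mul]
    _ ≤ q ^ (r * n) * (q ^ (n * r) * ((t + 1) * (n ^ 2).choose t * q ^ t)) := by
        gcongr
        exact hq ▸ card_sparseMatrix_le ht
    _ = _ := by ring

/-- **Counting non-rigid matrices.** Let `F` be a finite field with `q` elements, and
`n ≥ 1`, `r ≤ n`, `t ≤ n²/2`. The number of `n × n` matrices `M` over `F` such that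
`rank (M + S) ≤ r` for some matrix `S` with at most `t` nonzero entries is at most
`q^(2rn) · (t+1) · C(n², t) · q^t`. -/
theorem count_nonrigid_matrices (F : Type) [Field F] [Fintype F] [DecidableEq F]
    (q n r t : ℕ) (hq : Fintype.card F = q) (hn : 1 ≤ n) (hr : r ≤ n)
    (ht : 2 * t ≤ n ^ 2) :
    Nat.card {M : Matrix (Fin n) (Fin n) F |
        ∃ S : Matrix (Fin n) (Fin n) F, nonzeroEntries S ≤ t ∧ (M + S).rank ≤ r}
      ≤ q ^ (2 * r * n) * (t + 1) * Nat.choose (n ^ 2) t * q ^ t :=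
  count_nonrigid_matrices_general F q n r t hq ht
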